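/- Let 0 < λ'' < λ' < λ_max, let θ*(λ') be the Euclidean projection of Y/λ' onto the dual feasible set ℱ, and set a = (1/2)(Y/λ'' − θ*(λ')), b = Y/λ' − θ*(λ') (b ≠ 0 since λ' < λ_max), v = a − (⟨a,b⟩/‖b‖₂²)·b, and o = θ*(λ') + v. If ‖Bᵢᵀ o‖_{q̄} < 1 − T_{Bᵢᵀ}^{q̄}·‖v‖₂ for some group index i, then every minimizer W* = (w*₁,…,w*_s) of the primal objective f(W) = (1/2)‖Y − Σⱼ Bⱼwⱼ‖₂² + λ''Σⱼ‖wⱼ‖_q satisfies w*ᵢ = 0. -/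

import Mathlib

open scoped ENNReal BigOperators
open Matrix

/-- The vector ℓq norm for q ∈ [1,∞]. -/
noncomputable def lqNorm {n : ℕ} (q : ℝ≥0∞) (x : Fin n → ℝ) : ℝ :=
  if q = ⊤ then ⨆ i, |x i| else (∑ i, |x i| ^ q.toReal) ^ (1 / q.toReal)

/-- The constant `T_A^q`: `(∑ₖ ‖aₖ‖₂^q)^{1/q}` for `q ∈ [1,∞)`,
`maxₖ ‖aₖ‖₂` for `q = ∞`, where `aₖ` is the `k`-th row of `A`. -/
noncomputable def TA {n t : ℕ} (q : ℝ≥0∞) (A : Matrix (Fin n) (Fin t) ℝ) : ℝ :=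
  if q = ⊤ then ⨆ k, Real.sqrt (∑ j, A k j ^ 2)
  else (∑ k, Real.sqrt (∑ j, A k j ^ 2) ^ q.toReal) ^ (1 / q.toReal)

/-! A minimiser `W` yields the dual point `θ = (Y - Σⱼ Bⱼwⱼ)/λ''`. Minimality in each block says
that `Bⱼᵀθ` is a subgradient of `‖·‖_q` at `wⱼ`: `⟨Bⱼᵀθ, u⟩ ≤ ‖u‖_q` for all `u`, so `θ ∈ ℱ` by
`ℓq`–`ℓq̄` duality, and `⟨Bⱼᵀθ, wⱼ⟩ = ‖wⱼ‖_q`. Summing the latter over `j` against any point of `ℱ`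
shows that `θ` is the projection of `Y/λ''` onto `ℱ`; in particular `θ` lies in the ball with
diameter `[θ*(λ'), Y/λ'']`. The projection inequality for `θ*(λ')` puts `θ` in the half-space
`⟨b, θ - θ*(λ')⟩ ≤ 0` as well. Since `⟨a, b⟩ ≥ 0` (from `λ'' < λ'` and `0 ∈ ℱ`), the
intersection of that ball and half-space lies in the ball with centre `o` and radius `‖v‖₂`.
There `‖Bᵢᵀθ‖_{q̄} ≤ ‖Bᵢᵀo‖_{q̄} + T·‖v‖₂ < 1`, so by Hölder `‖wᵢ‖_q = ⟨Bᵢᵀθ, wᵢ⟩ < ‖wᵢ‖_q`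
unless `wᵢ = 0`. -/

section LqNorm

variable {n : ℕ} {q : ℝ≥0∞}

lemma lqNorm_eq_norm_toLp (hq : q ≠ 0) (x : Fin n → ℝ) :
    lqNorm q x = ‖WithLp.toLp q x‖ := by
  unfold lqNorm
  split_ifs with htop
  · subst htop
    simp [PiLp.norm_eq_ciSup, Real.norm_eq_abs]
  · rw [PiLp.norm_eq_sum (ENNReal.toReal_pos hq htop)]
    simp [Real.norm_eq_abs]

lemma lqNorm_top (x : Fin n → ℝ) : lqNorm ⊤ x = ⨆ k, |x k| := if_pos rfl

lemma lqNorm_one (x : Fin n → ℝ) : lqNorm 1 x = ∑ k, |x k| := by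
  simp [lqNorm]

lemma abs_le_lqNorm_top (x : Fin n → ℝ) (k : Fin n) : |x k| ≤ lqNorm ⊤ x := by
  rw [lqNorm_top]
  exact le_ciSup (Finite.bddAbove_range fun k => |x k|) k

lemma lqNorm_top_le {x : Fin n → ℝ} {c : ℝ} (hc : 0 ≤ c) (h : ∀ k, |x k| ≤ c) :
    lqNorm ⊤ x ≤ c := by
  rw [lqNorm_top]
  exact Real.iSup_le h hc

lemma lqNorm_mono {x y : Fin n → ℝ} (h : ∀ k, |x k| ≤ y k) : lqNorm q x ≤ lqNorm q y := by
  have hxy (k : Fin n) : |x k| ≤ |y k| := (h k).trans (le_abs_self _)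
  unfold lqNorm
  split_ifs
  · exact ciSup_mono (Finite.bddAbove_range fun k => |y k|) hxy
  · gcongr (∑ k, ?_ ^ _) ^ _ with k
    exact hxy k

noncomputable def lqSeminorm (q : ℝ≥0∞) [Fact (1 ≤ q)] (n : ℕ) : Seminorm ℝ (Fin n → ℝ) :=
  (normSeminorm ℝ (PiLp q fun _ : Fin n => ℝ)).comp
    (WithLp.linearEquiv q ℝ (Fin n → ℝ)).symm.toLinearMap

variable [Fact (1 ≤ q)]

lemma lqSeminorm_apply (x : Fin n → ℝ) : lqSeminorm q n x = lqNorm q x := by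
  rw [lqNorm_eq_norm_toLp (zero_lt_one.trans_le Fact.out).ne']
  rfl

lemma lqNorm_nonneg (x : Fin n → ℝ) : 0 ≤ lqNorm q x := by
  rw [← lqSeminorm_apply]
  exact apply_nonneg _ _

lemma lqNorm_add_le (x y : Fin n → ℝ) : lqNorm q (x + y) ≤ lqNorm q x + lqNorm q y := by
  simp only [← lqSeminorm_apply]
  exact map_add_le_add _ _ _

lemma lqNorm_smul (c : ℝ) (x : Fin n → ℝ) : lqNorm q (c • x) = |c| * lqNorm q x := by
  simp only [← lqSeminorm_apply, map_smul_eq_mul, Real.norm_eq_abs]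

lemma lqNorm_pos {x : Fin n → ℝ} (hx : x ≠ 0) : 0 < lqNorm q x := by
  rw [lqNorm_eq_norm_toLp (zero_lt_one.trans_le Fact.out).ne', norm_pos_iff]
  simpa using hx

end LqNorm

section Holder

variable {n : ℕ} {q qb : ℝ≥0∞}

lemma dotProduct_le_lqNorm_one_mul_lqNorm_top (x u : Fin n → ℝ) :
    x ⬝ᵥ u ≤ lqNorm 1 x * lqNorm ⊤ u := by
  rw [lqNorm_one, Finset.sum_mul]
  refine Finset.sum_le_sum fun k _ => ?_
  calc x k * u k ≤ |x k| * |u k| := by rw [← abs_mul]; exact le_abs_self _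
    _ ≤ |x k| * lqNorm ⊤ u := by gcongr; exact abs_le_lqNorm_top u k

lemma dotProduct_le_lqNorm_mul_lqNorm [q.HolderConjugate qb] (x u : Fin n → ℝ) :
    x ⬝ᵥ u ≤ lqNorm qb x * lqNorm q u := by
  rcases eq_or_ne q ⊤ with rfl | hq
  · rw [(ENNReal.HolderConjugate.eq_top_iff_eq_one ⊤ qb).1 rfl]
    exact dotProduct_le_lqNorm_one_mul_lqNorm_top x u
  rcases eq_or_ne qb ⊤ with rfl | hqb
  · rw [(ENNReal.HolderConjugate.eq_top_iff_eq_one ⊤ q).1 rfl, dotProduct_comm, mul_comm]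
    exact dotProduct_le_lqNorm_one_mul_lqNorm_top u x
  rw [lqNorm, lqNorm, if_neg hq, if_neg hqb]
  exact Real.inner_le_Lp_mul_Lq _ x u (ENNReal.HolderConjugate.toReal_of_ne_top hqb hq)

lemma abs_sign_le_one (a : ℝ) : |(SignType.sign a : ℝ)| ≤ 1 := by
  obtain _ | _ | _ := SignType.sign a <;> simp

lemma lqNorm_le_one_of_forall_dotProduct_le [q.HolderConjugate qb] {x : Fin n → ℝ}
    (h : ∀ u, x ⬝ᵥ u ≤ lqNorm q u) : lqNorm qb x ≤ 1 := by
  rcases eq_or_ne q ⊤ with rfl | hq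
  · rw [(ENNReal.HolderConjugate.eq_top_iff_eq_one ⊤ qb).1 rfl]
    calc lqNorm 1 x = x ⬝ᵥ fun k => (SignType.sign (x k) : ℝ) := by
          simp only [lqNorm_one, dotProduct, self_mul_sign]
      _ ≤ 1 := (h _).trans (lqNorm_top_le zero_le_one fun k => abs_sign_le_one (x k))
  rcases eq_or_ne qb ⊤ with rfl | hqb
  · rw [(ENNReal.HolderConjugate.eq_top_iff_eq_one ⊤ q).1 rfl] at h
    have h_single (k : Fin n) (c : ℝ) : x k * c ≤ |c| := by
      simpa [dotProduct_single, lqNorm_one, Pi.single_apply, apply_ite] using h (Pi.single k c)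
    refine lqNorm_top_le zero_le_one fun k => abs_le.2 ⟨?_, ?_⟩
    · exact neg_le.1 (by simpa using h_single k (-1))
    · simpa using h_single k 1
  -- test `h` against a maximiser of `g ↦ ∑ₖ |x k| g k` on the unit ball of `ℓ^q`, with signs
  obtain ⟨⟨g, hg, hxg⟩, -⟩ := NNReal.isGreatest_Lp Finset.univ (fun k => ‖x k‖₊)
    (ENNReal.HolderConjugate.toReal_of_ne_top hqb hq)
  have hg_norm : lqNorm q (fun k => (g k : ℝ)) ≤ 1 := by
    rw [lqNorm, if_neg hq]
    refine Real.rpow_le_one (by positivity) ?_ (by positivity)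
    simpa [← NNReal.coe_le_coe] using hg
  calc lqNorm qb x = x ⬝ᵥ fun k => SignType.sign (x k) * g k := by
        rw [lqNorm, if_neg hqb]
        simpa [← NNReal.coe_inj, dotProduct, ← mul_assoc, self_mul_sign] using hxg.symm
    _ ≤ 1 := (h _).trans <| (lqNorm_mono fun k => ?_).trans hg_norm
  rw [abs_mul, NNReal.abs_eq]
  exact mul_le_of_le_one_left (g k).2 (abs_sign_le_one _)

lemma dotProduct_le_lqNorm_of_lqNorm_le_one [q.HolderConjugate qb] {x : Fin n → ℝ}
    (hx : lqNorm qb x ≤ 1) (u : Fin n → ℝ) : x ⬝ᵥ u ≤ lqNorm q u := by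
  have : Fact (1 ≤ q) := ⟨ENNReal.HolderConjugate.one_le q qb⟩
  exact (dotProduct_le_lqNorm_mul_lqNorm x u).trans (mul_le_of_le_one_left (lqNorm_nonneg u) hx)

lemma eq_zero_of_lqNorm_lt_one [q.HolderConjugate qb] {x w : Fin n → ℝ}
    (hx : lqNorm qb x < 1) (hw : lqNorm q w ≤ x ⬝ᵥ w) : w = 0 := by
  have : Fact (1 ≤ q) := ⟨ENNReal.HolderConjugate.one_le q qb⟩
  by_contra hw0
  have hpos : 0 < lqNorm q w := lqNorm_pos hw0
  nlinarith [dotProduct_le_lqNorm_mul_lqNorm (q := q) (qb := qb) x w]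

end Holder

section TA

variable {n t : ℕ} {q : ℝ≥0∞}

lemma TA_eq_lqNorm (M : Matrix (Fin n) (Fin t) ℝ) :
    TA q M = lqNorm q fun k => √(∑ j, M k j ^ 2) := by
  simp only [TA, lqNorm, abs_of_nonneg (Real.sqrt_nonneg _)]

variable [Fact (1 ≤ q)]

lemma TA_nonneg (M : Matrix (Fin n) (Fin t) ℝ) : 0 ≤ TA q M := by
  rw [TA_eq_lqNorm]
  exact lqNorm_nonneg _

lemma lqNorm_mulVec_le (M : Matrix (Fin n) (Fin t) ℝ) (u : Fin t → ℝ) :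
    lqNorm q (M *ᵥ u) ≤ TA q M * √(∑ j, u j ^ 2) := by
  have hrow (k : Fin n) : |(M *ᵥ u) k| ≤ √(∑ j, u j ^ 2) * √(∑ j, M k j ^ 2) := by
    calc |(M *ᵥ u) k| = √((∑ j, M k j * u j) ^ 2) := (Real.sqrt_sq_eq_abs _).symm
      _ ≤ √((∑ j, M k j ^ 2) * ∑ j, u j ^ 2) :=
        Real.sqrt_le_sqrt (Finset.sum_mul_sq_le_sq_mul_sq _ _ _)
      _ = √(∑ j, u j ^ 2) * √(∑ j, M k j ^ 2) := by
        rw [Real.sqrt_mul (by positivity), mul_comm]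
  calc lqNorm q (M *ᵥ u) ≤ lqNorm q (√(∑ j, u j ^ 2) • fun k => √(∑ j, M k j ^ 2)) :=
        lqNorm_mono hrow
    _ = TA q M * √(∑ j, u j ^ 2) := by
        rw [lqNorm_smul, abs_of_nonneg (Real.sqrt_nonneg _), TA_eq_lqNorm, mul_comm]

lemma lqNorm_mulVec_lt_one_of_sum_sq_sub_le (M : Matrix (Fin n) (Fin t) ℝ) {o θ : Fin t → ℝ}
    {ρ : ℝ} (hscreen : lqNorm q (M *ᵥ o) < 1 - TA q M * √ρ)
    (hθ : ∑ j, (θ j - o j) ^ 2 ≤ ρ) : lqNorm q (M *ᵥ θ) < 1 := by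
  calc lqNorm q (M *ᵥ θ) = lqNorm q (M *ᵥ o + M *ᵥ (θ - o)) := by
        rw [← mulVec_add, add_sub_cancel]
    _ ≤ lqNorm q (M *ᵥ o) + TA q M * √(∑ j, (θ j - o j) ^ 2) :=
        (lqNorm_add_le _ _).trans (add_le_add_right (lqNorm_mulVec_le M (θ - o)) _)
    _ ≤ lqNorm q (M *ᵥ o) + TA q M * √ρ := by gcongr; exact TA_nonneg M
    _ < 1 := by linarith

end TA

section Geometry

variable {ι : Type*} [Fintype ι]

lemma dotProduct_sub_nonpos_of_forall_sum_sq_le {K : Set (ι → ℝ)} (hK : Convex ℝ K)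
    {c θ₀ : ι → ℝ} (hθ₀ : θ₀ ∈ K) (hmin : ∀ θ ∈ K, ∑ k, (c k - θ₀ k) ^ 2 ≤ ∑ k, (c k - θ k) ^ 2)
    {θ : ι → ℝ} (hθ : θ ∈ K) : (c - θ₀) ⬝ᵥ (θ - θ₀) ≤ 0 := by
  let e := WithLp.linearEquiv 2 ℝ (ι → ℝ)
  have hnorm (x y : ι → ℝ) :
      ‖(WithLp.toLp 2 x : EuclideanSpace ℝ ι) - WithLp.toLp 2 y‖ = √(∑ k, (x k - y k) ^ 2) := by
    simp [EuclideanSpace.norm_eq]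
  have hinf : ‖(WithLp.toLp 2 c : EuclideanSpace ℝ ι) - WithLp.toLp 2 θ₀‖ =
      ⨅ w : e ⁻¹' K, ‖WithLp.toLp 2 c - (w : EuclideanSpace ℝ ι)‖ := by
    have : Nonempty (e ⁻¹' K) := ⟨⟨_, hθ₀⟩⟩
    refine le_antisymm (le_ciInf fun w => ?_)
      (ciInf_le ⟨0, ?_⟩ (⟨WithLp.toLp 2 θ₀, hθ₀⟩ : e ⁻¹' K))
    · rw [hnorm, ← WithLp.toLp_ofLp (p := 2) (w : EuclideanSpace ℝ ι), hnorm]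
      exact Real.sqrt_le_sqrt (hmin _ w.2)
    · rintro _ ⟨w, rfl⟩
      exact norm_nonneg _
  have := (norm_eq_iInf_iff_real_inner_le_zero (hK.linear_preimage e.toLinearMap) hθ₀).1 hinf
    (WithLp.toLp 2 θ) hθ
  simpa [← WithLp.toLp_sub, EuclideanSpace.inner_toLp_toLp, dotProduct_comm] using this

lemma dotProduct_smul_sub_nonneg {c θ₀ : ι → ℝ} {κ : ℝ} (hκ : 1 ≤ κ)
    (h : 0 ≤ (c - θ₀) ⬝ᵥ θ₀) : 0 ≤ (κ • c - θ₀) ⬝ᵥ (c - θ₀) := by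
  have key : (κ • c - θ₀) ⬝ᵥ (c - θ₀) =
      κ * (c - θ₀) ⬝ᵥ (c - θ₀) + (κ - 1) * (c - θ₀) ⬝ᵥ θ₀ := by
    simp only [dotProduct_sub, sub_dotProduct, smul_dotProduct, smul_eq_mul, dotProduct_comm θ₀ c]
    ring
  have hsq : 0 ≤ (c - θ₀) ⬝ᵥ (c - θ₀) := Finset.sum_nonneg fun k _ => mul_self_nonneg _
  rw [key]
  nlinarith

lemma dotProduct_self_sub_le_of_ball_inter_halfspace {θ₀ θ y a b v : ι → ℝ}
    (ha : a = (1 / 2 : ℝ) • (y - θ₀)) (hv : v = a - (a ⬝ᵥ b / b ⬝ᵥ b) • b)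
    (hball : (y - θ) ⬝ᵥ (θ₀ - θ) ≤ 0) (hhalf : b ⬝ᵥ (θ - θ₀) ≤ 0) (hab : 0 ≤ a ⬝ᵥ b) :
    (θ - (θ₀ + v)) ⬝ᵥ (θ - (θ₀ + v)) ≤ v ⬝ᵥ v := by
  set μ := a ⬝ᵥ b / b ⬝ᵥ b
  have hμ : 0 ≤ μ := div_nonneg hab (Finset.sum_nonneg fun k _ => mul_self_nonneg (b k))
  have key : (θ - (θ₀ + v)) ⬝ᵥ (θ - (θ₀ + v)) =
      v ⬝ᵥ v + (y - θ) ⬝ᵥ (θ₀ - θ) + 2 * μ * (b ⬝ᵥ (θ - θ₀)) := by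
    subst hv ha
    simp only [dotProduct_sub, sub_dotProduct, add_dotProduct, dotProduct_add,
      smul_dotProduct, dotProduct_smul, smul_eq_mul, dotProduct_comm b, dotProduct_comm θ θ₀,
      dotProduct_comm θ y, dotProduct_comm θ₀ y]
    ring
  rw [key]
  nlinarith [mul_nonneg hμ (neg_nonneg.2 hhalf)]

end Geometry

open Filter Topology in
lemma le_of_forall_pos_le_add_mul {a b c : ℝ} (h : ∀ t, 0 < t → t ≤ 1 → a ≤ b + t * c) :
    a ≤ b := by
  have hlim : Tendsto (fun t => b + t * c) (𝓝[>] 0) (𝓝 b) := by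
    have hcont : Continuous fun t : ℝ => b + t * c := by fun_prop
    simpa using (hcont.tendsto 0).mono_left nhdsWithin_le_nhds
  refine ge_of_tendsto hlim ?_
  filter_upwards [Ioc_mem_nhdsGT zero_lt_one] with t ht using h t ht.1 ht.2

section Subgradient

variable {ι : Type*} [Fintype ι] (N : Seminorm ℝ (ι → ℝ)) {g w : ι → ℝ} {Q : (ι → ℝ) → ℝ}

lemma dotProduct_le_seminorm_of_forall_le (hQ : ∀ (t : ℝ) d, Q (t • d) = t ^ 2 * Q d)
    (hmin : ∀ w', g ⬝ᵥ (w' - w) ≤ Q (w' - w) + (N w' - N w)) (u : ι → ℝ) : g ⬝ᵥ u ≤ N u := by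
  refine le_of_forall_pos_le_add_mul (c := Q u) fun t ht _ => le_of_mul_le_mul_left ?_ ht
  have hstep := hmin (w + t • u)
  have hN : N (w + t • u) ≤ N w + t * N u := by
    simpa [map_smul_eq_mul, abs_of_pos ht] using map_add_le_add N w (t • u)
  rw [add_sub_cancel_left, hQ, dotProduct_smul, smul_eq_mul] at hstep
  nlinarith

lemma seminorm_le_dotProduct_of_forall_le (hQ : ∀ (t : ℝ) d, Q (t • d) = t ^ 2 * Q d)
    (hmin : ∀ w', g ⬝ᵥ (w' - w) ≤ Q (w' - w) + (N w' - N w)) : N w ≤ g ⬝ᵥ w := by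
  refine le_of_forall_pos_le_add_mul (c := Q w) fun t ht ht1 => le_of_mul_le_mul_left ?_ ht
  have hstep := hmin ((1 - t) • w)
  rw [show (1 - t) • w - w = (-t) • w by module, hQ, dotProduct_smul, smul_eq_mul,
    map_smul_eq_mul, Real.norm_eq_abs, abs_of_nonneg (by linarith)] at hstep
  nlinarith

end Subgradient

lemma Fintype.sum_apply_update {ι M : Type*} [Fintype ι] [DecidableEq ι] [AddCommGroup M]
    {α : ι → Type*} (f : ∀ i, α i → M) (g : ∀ i, α i) (i : ι) (v : α i) :
    ∑ j, f j (Function.update g i v j) = ∑ j, f j (g j) + (f i v - f i (g i)) := by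
  simp_rw [Function.apply_update f]
  rw [Finset.sum_update_of_mem (Finset.mem_univ i), ← Finset.add_sum_erase _ _ (Finset.mem_univ i),
    Finset.sdiff_singleton_eq_erase]
  abel

section GroupLasso

variable {m s : ℕ} {p : Fin s → ℕ} (B : (i : Fin s) → Matrix (Fin m) (Fin (p i)) ℝ)
  (Y : Fin m → ℝ) (q qb : ℝ≥0∞) (lam : ℝ)

noncomputable def groupLassoObjective (W : (j : Fin s) → Fin (p j) → ℝ) : ℝ :=
  (1 / 2) * ∑ k, (Y k - ∑ j, (B j).mulVec (W j) k) ^ 2 + lam * ∑ j, lqNorm q (W j)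

noncomputable def dualPoint (W : (j : Fin s) → Fin (p j) → ℝ) : Fin m → ℝ :=
  lam⁻¹ • (Y - ∑ j, B j *ᵥ W j)

def dualFeasibleSet : Set (Fin m → ℝ) := {θ | ∀ i, lqNorm qb ((B i)ᵀ *ᵥ θ) ≤ 1}

variable {B Y q qb lam}

lemma convex_dualFeasibleSet [Fact (1 ≤ qb)] : Convex ℝ (dualFeasibleSet B qb) := by
  have : dualFeasibleSet B qb =
      ⋂ i, (Matrix.mulVecLin (B i)ᵀ) ⁻¹' (lqSeminorm qb (p i)).closedBall 0 1 := by
    ext θ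
    simp only [dualFeasibleSet, Set.mem_iInter, Set.mem_preimage, Matrix.mulVecLin_apply,
      Seminorm.mem_closedBall, sub_zero, lqSeminorm_apply, Set.mem_ofPred_eq]
  rw [this]
  exact convex_iInter fun i => ((lqSeminorm qb (p i)).convex_closedBall 0 1).linear_preimage _

lemma zero_mem_dualFeasibleSet [Fact (1 ≤ qb)] : (0 : Fin m → ℝ) ∈ dualFeasibleSet B qb :=
  fun i => by simp [← lqSeminorm_apply]

lemma groupLassoObjective_update (W : (j : Fin s) → Fin (p j) → ℝ) (j : Fin s)
    (w : Fin (p j) → ℝ) :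
    groupLassoObjective B Y q lam (Function.update W j w) =
      groupLassoObjective B Y q lam W - (Y - ∑ j, B j *ᵥ W j) ⬝ᵥ (B j *ᵥ (w - W j)) +
        (1 / 2) * (B j *ᵥ (w - W j)) ⬝ᵥ (B j *ᵥ (w - W j)) +
        lam * (lqNorm q w - lqNorm q (W j)) := by
  set r := Y - ∑ j, B j *ᵥ W j
  set e := B j *ᵥ (w - W j)
  have hres (k : Fin m) : Y k - ∑ j', (B j' *ᵥ Function.update W j w j') k = r k - e k := by
    rw [Fintype.sum_apply_update (fun j' v => (B j' *ᵥ v) k)]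
    simp only [r, e, mulVec_sub, Pi.sub_apply, Finset.sum_apply]
    ring
  have hsq : ∑ k, (r k - e k) ^ 2 = ∑ k, r k ^ 2 - 2 * r ⬝ᵥ e + e ⬝ᵥ e := by
    simp only [dotProduct, Finset.mul_sum, ← Finset.sum_sub_distrib, ← Finset.sum_add_distrib]
    exact Finset.sum_congr rfl fun k _ => by ring
  have hr (k : Fin m) : Y k - ∑ j, (B j *ᵥ W j) k = r k := by simp [r, Finset.sum_apply]
  simp only [groupLassoObjective, hres, hr, hsq, Fintype.sum_apply_update (fun j v => lqNorm q v)]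
  ring

variable {W : (j : Fin s) → Fin (p j) → ℝ} [Fact (1 ≤ q)]

-- minimality of `W` in the single block `j`, divided by `λ`
lemma dualPoint_dotProduct_le_of_isMin (hlam : 0 < lam)
    (hW : ∀ W', groupLassoObjective B Y q lam W ≤ groupLassoObjective B Y q lam W')
    (j : Fin s) (w : Fin (p j) → ℝ) :
    ((B j)ᵀ *ᵥ dualPoint B Y lam W) ⬝ᵥ (w - W j) ≤
      (2 * lam)⁻¹ * (B j *ᵥ (w - W j)) ⬝ᵥ (B j *ᵥ (w - W j)) +
        (lqSeminorm q (p j) w - lqSeminorm q (p j) (W j)) := by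
  have h := hW (Function.update W j w)
  rw [groupLassoObjective_update] at h
  rw [lqSeminorm_apply, lqSeminorm_apply, mulVec_transpose, ← dotProduct_mulVec, dualPoint,
    smul_dotProduct, smul_eq_mul]
  calc lam⁻¹ * (Y - ∑ j, B j *ᵥ W j) ⬝ᵥ (B j *ᵥ (w - W j))
      ≤ lam⁻¹ * ((1 / 2) * (B j *ᵥ (w - W j)) ⬝ᵥ (B j *ᵥ (w - W j)) +
          lam * (lqNorm q w - lqNorm q (W j))) := by
        gcongr
        linarith
    _ = _ := by field_simp

lemma dualPoint_dotProduct_le_lqNorm_of_isMin (hlam : 0 < lam)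
    (hW : ∀ W', groupLassoObjective B Y q lam W ≤ groupLassoObjective B Y q lam W')
    (j : Fin s) (u : Fin (p j) → ℝ) :
    ((B j)ᵀ *ᵥ dualPoint B Y lam W) ⬝ᵥ u ≤ lqNorm q u := by
  rw [← lqSeminorm_apply]
  refine dotProduct_le_seminorm_of_forall_le _
    (Q := fun d => (2 * lam)⁻¹ * (B j *ᵥ d) ⬝ᵥ (B j *ᵥ d)) (fun t d => ?_)
    (dualPoint_dotProduct_le_of_isMin hlam hW j) u
  simp only [mulVec_smul, smul_dotProduct, dotProduct_smul, smul_eq_mul]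
  ring

lemma lqNorm_le_dualPoint_dotProduct_of_isMin (hlam : 0 < lam)
    (hW : ∀ W', groupLassoObjective B Y q lam W ≤ groupLassoObjective B Y q lam W')
    (j : Fin s) :
    lqNorm q (W j) ≤ ((B j)ᵀ *ᵥ dualPoint B Y lam W) ⬝ᵥ W j := by
  rw [← lqSeminorm_apply]
  refine seminorm_le_dotProduct_of_forall_le _
    (Q := fun d => (2 * lam)⁻¹ * (B j *ᵥ d) ⬝ᵥ (B j *ᵥ d)) (fun t d => ?_)
    (dualPoint_dotProduct_le_of_isMin hlam hW j)
  simp only [mulVec_smul, smul_dotProduct, dotProduct_smul, smul_eq_mul]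
  ring

lemma dualPoint_mem_dualFeasibleSet [q.HolderConjugate qb] (hlam : 0 < lam)
    (hW : ∀ W', groupLassoObjective B Y q lam W ≤ groupLassoObjective B Y q lam W') :
    dualPoint B Y lam W ∈ dualFeasibleSet B qb := fun j =>
  lqNorm_le_one_of_forall_dotProduct_le (dualPoint_dotProduct_le_lqNorm_of_isMin hlam hW j)

lemma dotProduct_sub_dualPoint_nonpos [q.HolderConjugate qb] (hlam : 0 < lam)
    (hW : ∀ W', groupLassoObjective B Y q lam W ≤ groupLassoObjective B Y q lam W')
    {θ : Fin m → ℝ} (hθ : θ ∈ dualFeasibleSet B qb) :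
    (lam⁻¹ • Y - dualPoint B Y lam W) ⬝ᵥ (θ - dualPoint B Y lam W) ≤ 0 := by
  set θ' := dualPoint B Y lam W
  have hblock (j : Fin s) : (B j *ᵥ W j) ⬝ᵥ (θ - θ') ≤ 0 := by
    rw [dotProduct_comm, dotProduct_mulVec, ← mulVec_transpose, mulVec_sub, sub_dotProduct]
    linarith [dotProduct_le_lqNorm_of_lqNorm_le_one (q := q) (hθ j) (W j),
      lqNorm_le_dualPoint_dotProduct_of_isMin hlam hW j]
  rw [show lam⁻¹ • Y - θ' = lam⁻¹ • ∑ j, B j *ᵥ W j by simp [θ', dualPoint, smul_sub],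
    smul_dotProduct, sum_dotProduct, smul_eq_mul]
  exact mul_nonpos_of_nonneg_of_nonpos (inv_nonneg.2 hlam.le)
    (Finset.sum_nonpos fun j _ => hblock j)

end GroupLasso

theorem stmt19_general {m s : ℕ} (p : Fin s → ℕ)
    (B : (i : Fin s) → Matrix (Fin m) (Fin (p i)) ℝ) (Y : Fin m → ℝ)
    (q qb : ℝ≥0∞) (hconj : 1 / q + 1 / qb = 1)
    (lam' lam'' : ℝ) (h0 : 0 < lam'') (h1 : lam'' < lam')
    (θp : Fin m → ℝ)
    (hθpF : ∀ i, lqNorm qb ((B i)ᵀ.mulVec θp) ≤ 1)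
    (hθpProj : ∀ θ : Fin m → ℝ, (∀ i, lqNorm qb ((B i)ᵀ.mulVec θ) ≤ 1) →
      ∑ k, (Y k / lam' - θp k) ^ 2 ≤ ∑ k, (Y k / lam' - θ k) ^ 2)
    (i : Fin s) :
    let a : Fin m → ℝ := fun k => 1 / 2 * (Y k / lam'' - θp k)
    let b : Fin m → ℝ := fun k => Y k / lam' - θp k
    let vv : Fin m → ℝ := fun k =>
      a k - ((∑ j, a j * b j) / ∑ j, b j ^ 2) * b k
    let o : Fin m → ℝ := fun k => θp k + vv k
    lqNorm qb ((B i)ᵀ.mulVec o) <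
        1 - TA qb (B i)ᵀ * Real.sqrt (∑ k, vv k ^ 2) →
      ∀ W : (j : Fin s) → Fin (p j) → ℝ,
        (∀ W' : (j : Fin s) → Fin (p j) → ℝ,
          (1 / 2) * ∑ k, (Y k - ∑ j, (B j).mulVec (W j) k) ^ 2 +
              lam'' * ∑ j, lqNorm q (W j) ≤
            (1 / 2) * ∑ k, (Y k - ∑ j, (B j).mulVec (W' j) k) ^ 2 +
              lam'' * ∑ j, lqNorm q (W' j)) →
        W i = 0 := by
  intro a b v o hscreen W hW
  have : q.HolderConjugate qb := ENNReal.holderConjugate_iff.2 (by simpa [one_div] using hconj)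
  have : Fact (1 ≤ q) := ⟨ENNReal.HolderConjugate.one_le q qb⟩
  have : Fact (1 ≤ qb) := ⟨ENNReal.HolderConjugate.one_le qb q⟩
  set θ := dualPoint B Y lam'' W
  set c : Fin m → ℝ := fun k => Y k / lam'
  have hθ : θ ∈ dualFeasibleSet B qb := dualPoint_mem_dualFeasibleSet h0 hW
  have hproj : ∀ θ' ∈ dualFeasibleSet B qb, b ⬝ᵥ (θ' - θp) ≤ 0 := fun θ' hθ' =>
    dotProduct_sub_nonpos_of_forall_sum_sq_le convex_dualFeasibleSet hθpF hθpProj hθ'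
  have ha : a = (1 / 2 : ℝ) • (lam''⁻¹ • Y - θp) := by
    ext k
    simp [a, div_eq_inv_mul]
  have hab : 0 ≤ a ⬝ᵥ b := by
    have hY : lam''⁻¹ • Y = (lam' / lam'') • c := by
      ext k
      simp only [c, Pi.smul_apply, smul_eq_mul]
      field_simp [(h0.trans h1).ne']
    rw [ha, smul_dotProduct, hY]
    exact mul_nonneg (by norm_num) (dotProduct_smul_sub_nonneg ((one_le_div h0).2 h1.le)
      (by simpa [dotProduct_neg] using hproj 0 zero_mem_dualFeasibleSet : 0 ≤ b ⬝ᵥ θp))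
  have hball := dotProduct_self_sub_le_of_ball_inter_halfspace (v := v) ha
    (by ext k; simp only [v, Pi.sub_apply, Pi.smul_apply, smul_eq_mul, dotProduct, sq])
    (dotProduct_sub_dualPoint_nonpos h0 hW hθpF) (hproj θ hθ) hab
  have hlt : lqNorm qb ((B i)ᵀ *ᵥ θ) < 1 :=
    lqNorm_mulVec_lt_one_of_sum_sq_sub_le (B i)ᵀ hscreen (by simpa [dotProduct, sq] using hball)
  exact eq_zero_of_lqNorm_lt_one hlt (lqNorm_le_dualPoint_dotProduct_of_isMin h0 hW i)

/-- Screening rule: let `0 < λ'' < λ' < λ_max`, let `θ*(λ')` be the Euclidean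
projection of `Y/λ'` onto the dual feasible set `ℱ`, and set
`a = (1/2)(Y/λ'' − θ*(λ'))`, `b = Y/λ' − θ*(λ')`,
`v = a − (⟨a,b⟩/‖b‖₂²)·b`, `o = θ*(λ') + v`.  If
`‖Bᵢᵀ o‖_{q̄} < 1 − T_{Bᵢᵀ}^{q̄}·‖v‖₂` for some group index `i`, then every
minimizer `W*` of `f(W) = (1/2)‖Y − Σⱼ Bⱼwⱼ‖₂² + λ''Σⱼ‖wⱼ‖_q` satisfies
`w*ᵢ = 0`. -/
theorem stmt19 {m s : ℕ} [NeZero s] (p : Fin s → ℕ)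
    (B : (i : Fin s) → Matrix (Fin m) (Fin (p i)) ℝ) (Y : Fin m → ℝ)
    (q qb : ℝ≥0∞) (hq : 1 ≤ q) (hconj : 1 / q + 1 / qb = 1)
    (lam' lam'' : ℝ) (h0 : 0 < lam'') (h1 : lam'' < lam')
    (h2 : lam' < Finset.univ.sup' Finset.univ_nonempty
        (fun i => lqNorm qb ((B i)ᵀ.mulVec Y)))
    (θp : Fin m → ℝ)
    (hθpF : ∀ i, lqNorm qb ((B i)ᵀ.mulVec θp) ≤ 1)
    (hθpProj : ∀ θ : Fin m → ℝ, (∀ i, lqNorm qb ((B i)ᵀ.mulVec θ) ≤ 1) →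
      ∑ k, (Y k / lam' - θp k) ^ 2 ≤ ∑ k, (Y k / lam' - θ k) ^ 2)
    (i : Fin s) :
    let a : Fin m → ℝ := fun k => 1 / 2 * (Y k / lam'' - θp k)
    let b : Fin m → ℝ := fun k => Y k / lam' - θp k
    let vv : Fin m → ℝ := fun k =>
      a k - ((∑ j, a j * b j) / ∑ j, b j ^ 2) * b k
    let o : Fin m → ℝ := fun k => θp k + vv k
    lqNorm qb ((B i)ᵀ.mulVec o) <
        1 - TA qb (B i)ᵀ * Real.sqrt (∑ k, vv k ^ 2) →
      ∀ W : (j : Fin s) → Fin (p j) → ℝ,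
        (∀ W' : (j : Fin s) → Fin (p j) → ℝ,
          (1 / 2) * ∑ k, (Y k - ∑ j, (B j).mulVec (W j) k) ^ 2 +
              lam'' * ∑ j, lqNorm q (W j) ≤
            (1 / 2) * ∑ k, (Y k - ∑ j, (B j).mulVec (W' j) k) ^ 2 +
              lam'' * ∑ j, lqNorm q (W' j)) →
        W i = 0 :=
  stmt19_general p B Y q qb hconj lam' lam'' h0 h1 θp hθpF hθpProj i
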